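/- arXiv:1104.3077 — 6 statements merged into one kernel-verified Lean document; each statement's English description precedes it below -/
import Mathlib

section
/- The set of ill-founded tree codes is complete analytic: for every closed set Y ⊆ (ℕ → ℕ) × (ℕ → ℕ) there exists a continuous function f from Baire space to the space of functions List ℕ → ℕ (with the product topology) such that for all α, (∃β, (α, β) ∈ Y) if and only if there exists β : ℕ → ℕ with (f α) [β 0, …, β (n-1)] = 0 for all n. -/
/-!
Given `α`, the sequences `s` with some `(a, b) ∈ Y` such that `a` agrees with `α` and `b` with `s`
on the first `|s|` places form a tree `T_α`. Membership of `s` in `T_α` depends only on the first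
`|s|` values of `α`, so the code of `T_α` depends continuously on `α`. Every `β` with `(α, β) ∈ Y`
is a branch of `T_α`; conversely a branch `β` of `T_α` is a limit of points `(aₙ, bₙ) ∈ Y` that
agree with `(α, β)` on the first `n` places, hence lies in `Y` because `Y` is closed.
-/

/-- The initial segment `[β 0, …, β (n-1)]` of an infinite sequence `β`. -/
def seg (β : ℕ → ℕ) (n : ℕ) : List ℕ := (List.range n).map β

open Filter Topology PiNat

open Classical in
/-- The code of the tree `T_α`. -/
noncomputable def treeCode (Y : Set ((ℕ → ℕ) × (ℕ → ℕ))) (α : ℕ → ℕ) (s : List ℕ) : ℕ :=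
  if ∃ p ∈ Y, p.1 ∈ cylinder α s.length ∧ seg p.2 s.length = s then 0 else 1

lemma seg_eq_seg_iff_mem_cylinder {α β : ℕ → ℕ} {n : ℕ} :
    seg α n = seg β n ↔ α ∈ cylinder β n := by
  simp [seg, List.map_inj_left]

lemma tendsto_of_forall_mem_cylinder {E : ℕ → Type*} [∀ n, TopologicalSpace (E n)]
    {x : ℕ → ∀ n, E n} {a : ∀ n, E n} (hx : ∀ n, x n ∈ cylinder a n) :
    Tendsto x atTop (𝓝 a) :=
  tendsto_pi_nhds.2 fun i =>
    tendsto_const_nhds.congr' <| (eventually_gt_atTop i).mono fun n hn => (hx n i hn).symm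

lemma IsClosed.mem_of_forall_exists_mem_cylinder {E F : ℕ → Type*}
    [∀ n, TopologicalSpace (E n)] [∀ n, TopologicalSpace (F n)]
    {Y : Set ((∀ n, E n) × (∀ n, F n))} (hY : IsClosed Y) {a : ∀ n, E n} {b : ∀ n, F n}
    (h : ∀ n, ∃ p ∈ Y, p.1 ∈ cylinder a n ∧ p.2 ∈ cylinder b n) : (a, b) ∈ Y := by
  choose p hpY hp₁ hp₂ using h
  have hp : Tendsto p atTop (𝓝 (a, b)) := by
    rw [nhds_prod_eq, tendsto_prod_iff']
    exact ⟨tendsto_of_forall_mem_cylinder hp₁, tendsto_of_forall_mem_cylinder hp₂⟩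
  exact hY.mem_of_tendsto hp (.of_forall hpY)

lemma treeCode_seg_eq_zero_iff {Y : Set ((ℕ → ℕ) × (ℕ → ℕ))} {α β : ℕ → ℕ} {n : ℕ} :
    treeCode Y α (seg β n) = 0 ↔ ∃ p ∈ Y, p.1 ∈ cylinder α n ∧ p.2 ∈ cylinder β n := by
  have hlen : (seg β n).length = n := by simp [seg]
  simp [treeCode, hlen, seg_eq_seg_iff_mem_cylinder]

lemma continuous_treeCode (Y : Set ((ℕ → ℕ) × (ℕ → ℕ))) : Continuous (treeCode Y) := by
  refine continuous_pi fun s => IsLocallyConstant.continuous ?_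
  refine (IsLocallyConstant.iff_eventually_eq _).2 fun α => ?_
  filter_upwards [(isOpen_cylinder _ α s.length).mem_nhds (self_mem_cylinder α s.length)]
    with α' hα'
  classical
  simp only [treeCode, mem_cylinder_iff_eq.1 hα']

/-- The set of ill-founded tree codes is complete analytic: every analytic set,
i.e. every projection of a closed subset of `(ℕ → ℕ) × (ℕ → ℕ)`, is reduced to
it by a continuous function. -/
theorem illfounded_complete_analytic
    (Y : Set ((ℕ → ℕ) × (ℕ → ℕ))) (hY : IsClosed Y) :
    ∃ f : (ℕ → ℕ) → (List ℕ → ℕ), Continuous f ∧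
      ∀ α : ℕ → ℕ,
        (∃ β, (α, β) ∈ Y) ↔ ∃ β : ℕ → ℕ, ∀ n, f α (seg β n) = 0 := by
  refine ⟨treeCode Y, continuous_treeCode Y, fun α => ⟨?_, ?_⟩⟩
  · rintro ⟨β, hβ⟩
    exact ⟨β, fun n => treeCode_seg_eq_zero_iff.2
      ⟨(α, β), hβ, self_mem_cylinder α n, self_mem_cylinder β n⟩⟩
  · rintro ⟨β, hβ⟩
    exact ⟨β, hY.mem_of_forall_exists_mem_cylinder fun n => treeCode_seg_eq_zero_iff.1 (hβ n)⟩
end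

section
/- The set of well-founded tree codes is complete co-analytic: for every open set U ⊆ (ℕ → ℕ) × (ℕ → ℕ) there exists a continuous function f from Baire space to the space of functions List ℕ → ℕ such that for all α, (∀β, (α, β) ∈ U) if and only if for every β : ℕ → ℕ there exists n with (f α) [β 0, …, β (n-1)] ≠ 0. -/
open Filter Topology PiNat

section Cylinders

variable {E F : ℕ → Type*} [∀ n, TopologicalSpace (E n)] [∀ n, DiscreteTopology (E n)]
  [∀ n, TopologicalSpace (F n)] [∀ n, DiscreteTopology (F n)]

theorem PiNat.hasBasis_nhds_cylinder (x : ∀ n, E n) :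
    (𝓝 x).HasBasis (fun _ => True) (cylinder x) := by
  refine ⟨fun t => ⟨fun ht => ?_, fun ⟨n, _, hn⟩ =>
    mem_of_superset ((isOpen_cylinder E x n).mem_nhds (self_mem_cylinder x n)) hn⟩⟩
  obtain ⟨_, ⟨y, n, rfl⟩, hx, hsub⟩ := (isTopologicalBasis_cylinders E).mem_nhds_iff.1 ht
  exact ⟨n, trivial, mem_cylinder_iff_eq.1 hx ▸ hsub⟩

theorem PiNat.exists_cylinder_prod_subset {U : Set ((∀ n, E n) × ∀ n, F n)} {x : ∀ n, E n}
    {y : ∀ n, F n} (hU : U ∈ 𝓝 (x, y)) : ∃ n, cylinder x n ×ˢ cylinder y n ⊆ U := by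
  rw [nhds_prod_eq] at hU
  simpa using ((hasBasis_nhds_cylinder x).prod_same_index_anti (hasBasis_nhds_cylinder y)
    (fun _ _ _ _ => cylinder_anti x) (fun _ _ _ _ => cylinder_anti y)).mem_iff.1 hU

end Cylinders

theorem length_seg (β : ℕ → ℕ) (n : ℕ) : (seg β n).length = n := by simp [seg]

theorem cylinder_getD_seg (β : ℕ → ℕ) (n : ℕ) :
    cylinder (fun i => (seg β n).getD i 0) n = cylinder β n := by
  ext γ
  simp +contextual [seg, List.getD_eq_getElem?_getD]

open Classical in
noncomputable def boxCode (U : Set ((ℕ → ℕ) × (ℕ → ℕ))) (α : ℕ → ℕ) (s : List ℕ) : ℕ :=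
  if cylinder α s.length ×ˢ cylinder (fun i => s.getD i 0) s.length ⊆ U then 1 else 0

theorem continuous_boxCode (U : Set ((ℕ → ℕ) × (ℕ → ℕ))) : Continuous (boxCode U) := by
  refine continuous_pi fun s => IsLocallyConstant.continuous ?_
  refine (IsLocallyConstant.iff_eventually_eq _).2 fun α => ?_
  filter_upwards [(isOpen_cylinder _ α s.length).mem_nhds (self_mem_cylinder α s.length)]
    with α' hα'
  rw [boxCode, boxCode, mem_cylinder_iff_eq.1 hα']

theorem boxCode_seg_ne_zero_iff (U : Set ((ℕ → ℕ) × (ℕ → ℕ))) (α β : ℕ → ℕ) (n : ℕ) :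
    boxCode U α (seg β n) ≠ 0 ↔ cylinder α n ×ˢ cylinder β n ⊆ U := by
  rw [boxCode, length_seg, cylinder_getD_seg]
  split_ifs with h <;> simp [h]

/-- The set of well-founded tree codes is complete co-analytic: every
co-analytic set, i.e. every co-projection of an open subset of
`(ℕ → ℕ) × (ℕ → ℕ)`, is reduced to it by a continuous function. -/
theorem wellfounded_complete_coanalytic
    (U : Set ((ℕ → ℕ) × (ℕ → ℕ))) (hU : IsOpen U) :
    ∃ f : (ℕ → ℕ) → (List ℕ → ℕ), Continuous f ∧
      ∀ α : ℕ → ℕ,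
        (∀ β, (α, β) ∈ U) ↔ ∀ β : ℕ → ℕ, ∃ n, f α (seg β n) ≠ 0 := by
  refine ⟨boxCode U, continuous_boxCode U, fun α => forall_congr' fun β => ?_⟩
  simp only [boxCode_seg_ne_zero_iff]
  exact ⟨fun h => exists_cylinder_prod_subset (hU.mem_nhds h),
    fun ⟨n, hn⟩ => hn ⟨self_mem_cylinder α n, self_mem_cylinder β n⟩⟩
end

section
/- Cantor diagonal for well-founded tree codes: for every continuous F : (ℕ → ℕ) → (List ℕ → ℕ) such that F β ∈ A¹₁ for every β, there exists α ∈ A¹₁ such that α is apart from every F β, i.e., for every β there is a list s with α s ≠ (F β) s. In particular A¹₁ is not the range of any continuous function on Baire space. -/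
/-- The set of well-founded tree codes. -/
def A11 : Set (List ℕ → ℕ) := {γ | ∀ β : ℕ → ℕ, ∃ n, γ (seg β n) ≠ 0}

/-!
Code pairs by `Nat.pair`. The tree `pairedTree F` consists of the sequences
`⟪β 0, x 0⟫, …, ⟪β (n-1), x (n-1)⟫` such that `F β` vanishes on `seg x m` for all `m ≤ n`.
It is well founded: along an infinite branch the witnesses `β` converge to some `βlim`, and by
continuity `F βlim` would vanish on every initial segment of the second coordinates.
`diagonalCode F` codes the tree obtained by putting `pairedTree F` below every child of a root.
If it were `F b`, the sequence `x 0 = 0`, `x (i+1) = ⟪b i, x i⟫` would be an infinite branch of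
it: every level of this branch lies, one step down, in `pairedTree F` with witness `b` itself.
-/

open Filter Topology

namespace CantorDiagonalA11

@[simp]
lemma length_seg (β : ℕ → ℕ) (n : ℕ) : (seg β n).length = n := by simp [seg]

lemma seg_succ (β : ℕ → ℕ) (n : ℕ) : seg β (n + 1) = β 0 :: seg (fun i => β (i + 1)) n := by
  simp [seg, List.range_succ_eq_map, List.map_map, Function.comp_def]

lemma seg_eq_seg_iff {β γ : ℕ → ℕ} {n : ℕ} : seg β n = seg γ n ↔ ∀ i < n, β i = γ i := by
  simp [seg, List.map_inj_left]

lemma seg_eq_seg_of_le {β γ : ℕ → ℕ} {m n : ℕ} (h : seg β n = seg γ n) (hmn : m ≤ n) :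
    seg β m = seg γ m :=
  seg_eq_seg_iff.2 fun i hi => seg_eq_seg_iff.1 h i (by omega)

lemma tendsto_of_seg_eq {α : Type*} [TopologicalSpace α] {β : ℕ → ℕ → α} {γ : ℕ → α}
    (h : ∀ n, ∀ i < n, β n i = γ i) : Tendsto β atTop (𝓝 γ) :=
  tendsto_pi_nhds.2 fun i => tendsto_atTop_of_eventually_const (i₀ := i + 1) fun n hn => h n i hn

variable (F : (ℕ → ℕ) → List ℕ → ℕ)

def pairedTree : Set (List ℕ) :=
  {t | ∃ β x : ℕ → ℕ, t = seg (fun i => Nat.pair (β i) (x i)) t.length ∧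
    ∀ m ≤ t.length, F β (seg x m) = 0}

open Classical in
noncomputable def diagonalCode : List ℕ → ℕ
  | [] => 0
  | _ :: t => if t ∈ pairedTree F then 0 else 1

variable {F}

lemma not_forall_seg_mem_pairedTree (hF : Continuous F) (hA : ∀ β, F β ∈ A11) (q : ℕ → ℕ) :
    ¬ ∀ n, seg q n ∈ pairedTree F := by
  intro h
  simp only [pairedTree, length_seg, Set.mem_ofPred_eq] at h
  choose β x hq hzero using h
  have hpair : ∀ n, ∀ i < n, Nat.pair (β n i) (x n i) = q i := fun n i hi =>
    (seg_eq_seg_iff.1 (hq n) i hi).symm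
  set βlim : ℕ → ℕ := fun i => (q i).unpair.1
  set xlim : ℕ → ℕ := fun i => (q i).unpair.2
  have hβ : ∀ n, ∀ i < n, β n i = βlim i := fun n i hi => by simp [βlim, ← hpair n i hi]
  have hx : ∀ n, ∀ i < n, x n i = xlim i := fun n i hi => by simp [xlim, ← hpair n i hi]
  obtain ⟨m, hm⟩ := hA βlim xlim
  have hlim : ∀ᶠ n in atTop, F (β n) (seg xlim m) = F βlim (seg xlim m) := by
    have := ((continuous_apply (seg xlim m)).comp hF).tendsto βlim |>.comp (tendsto_of_seg_eq hβ)
    rwa [nhds_discrete, tendsto_pure] at this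
  obtain ⟨n, hn, hmn⟩ := (hlim.and (eventually_ge_atTop m)).exists
  rw [← hn, ← seg_eq_seg_of_le (seg_eq_seg_iff.2 (hx n)) hmn] at hm
  exact hm (hzero n m hmn)

lemma diagonalCode_mem_A11 (hF : Continuous F) (hA : ∀ β, F β ∈ A11) :
    diagonalCode F ∈ A11 := by
  intro p
  by_contra! h
  refine not_forall_seg_mem_pairedTree hF hA (fun i => p (i + 1)) fun n => ?_
  have hn := h (n + 1)
  rw [seg_succ, diagonalCode] at hn
  by_contra hmem
  simp [hmem] at hn

def diagonalBranch (b : ℕ → ℕ) : ℕ → ℕ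
  | 0 => 0
  | i + 1 => Nat.pair (b i) (diagonalBranch b i)

lemma exists_diagonalCode_ne (b : ℕ → ℕ) (hb : F b ∈ A11) :
    ∃ s, diagonalCode F s ≠ F b s := by
  by_contra! h
  set x := diagonalBranch b
  have hzero : ∀ n, F b (seg x n) = 0 := by
    intro n
    induction n using Nat.strong_induction_on with
    | _ n ih =>
      rw [← h]
      cases n with
      | zero => rfl
      | succ n =>
        have hmem : seg (fun i => x (i + 1)) n ∈ pairedTree F :=
          ⟨b, x, by rw [length_seg]; rfl, fun m hm => ih m (by rw [length_seg] at hm; omega)⟩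
        rw [seg_succ, diagonalCode, if_pos hmem]
  obtain ⟨n, hn⟩ := hb x
  exact hn (hzero n)

end CantorDiagonalA11

open CantorDiagonalA11 in
/-- Cantor's diagonal argument for well-founded tree codes: every continuous
family of elements of `A¹₁` misses some element of `A¹₁`; in particular `A¹₁`
is not the range of a continuous function on Baire space. -/
theorem cantor_diagonal_A11 :
    (∀ F : (ℕ → ℕ) → (List ℕ → ℕ), Continuous F → (∀ β, F β ∈ A11) →
      ∃ α ∈ A11, ∀ β : ℕ → ℕ, ∃ s : List ℕ, α s ≠ F β s) ∧
    ¬ ∃ G : (ℕ → ℕ) → (List ℕ → ℕ), Continuous G ∧ Set.range G = A11 := by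
  have diagonal : ∀ F : (ℕ → ℕ) → (List ℕ → ℕ), Continuous F → (∀ β, F β ∈ A11) →
      ∃ α ∈ A11, ∀ β : ℕ → ℕ, ∃ s : List ℕ, α s ≠ F β s := fun F hF hA =>
    ⟨diagonalCode F, diagonalCode_mem_A11 hF hA, fun β => exists_diagonalCode_ne β (hA β)⟩
  refine ⟨diagonal, ?_⟩
  rintro ⟨G, hG, hrange⟩
  obtain ⟨α, hα, hne⟩ := diagonal G hG fun β => hrange ▸ Set.mem_range_self β
  obtain ⟨β, rfl⟩ := hrange ▸ hα
  obtain ⟨s, hs⟩ := hne β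
  exact hs rfl
end

section
/- Lusin separation for continuous functions: if f, g : (ℕ → ℕ) → (ℕ → ℕ) are continuous and f α ≠ g β for all α, β, then there exist Borel sets B₀, B₁ ⊆ (ℕ → ℕ) with B₀ ∩ B₁ = ∅, range f ⊆ B₀, and range g ⊆ B₁. -/
/-- Lusin separation for continuous functions: if the ranges of two continuous
functions on Baire space are disjoint, they can be separated by disjoint Borel
sets. -/
theorem lusin_separation (f g : (ℕ → ℕ) → (ℕ → ℕ))
    (hf : Continuous f) (hg : Continuous g)
    (hsep : ∀ α β, f α ≠ g β) :
    ∃ B₀ B₁ : Set (ℕ → ℕ), MeasurableSet B₀ ∧ MeasurableSet B₁ ∧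
      B₀ ∩ B₁ = ∅ ∧ Set.range f ⊆ B₀ ∧ Set.range g ⊆ B₁ := by
  obtain ⟨B, hfB, hgB, hB⟩ :=
    MeasureTheory.measurablySeparable_range_of_disjoint hf hg (Set.disjoint_range_iff.2 hsep)
  exact ⟨B, Bᶜ, hB, hB.compl, Set.inter_compl_self B, hfB, hgB.subset_compl_right⟩
end

section
/- The set E₂! is the range of a continuous injective function from Baire space: there exists a continuous injective F : (ℕ → ℕ) → (ℕ → ℕ → ℕ) whose range is exactly the set of all α : ℕ → ℕ → ℕ such that for exactly one k, α k is the zero function (that is, ∃k, (∀p, α k p = 0) ∧ ∀m ≠ k, ∃p, α m p ≠ 0). -/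
/-- The set `E₂!`: exactly one subsequence is identically zero. -/
def E2bang : Set (ℕ → ℕ → ℕ) :=
  {α | ∃ k, (∀ p, α k p = 0) ∧ ∀ m, m ≠ k → ∃ p, α m p ≠ 0}

/-!
Split `β` into its head `k = β 0` and, via `Nat.pair`, a sequence of rows. Each row is decoded into
a nonzero sequence by a continuous bijection (position of the first nonzero entry, that entry minus
one, then the tail), and a zero row is inserted at position `k`. The zero row is the only zero
row, so `k` and hence `β` can be read off the image; continuity holds because each entry of the
image depends on only finitely many entries of `β`.
-/

namespace Nat

def succAbove (k i : ℕ) : ℕ := if i < k then i else i + 1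

def insertNth {α : Type*} (k : ℕ) (a : α) (r : ℕ → α) (m : ℕ) : α :=
  if m < k then r m else if m = k then a else r (m - 1)

variable {α σ : Type*}

theorem succAbove_ne (k i : ℕ) : succAbove k i ≠ k := by
  unfold succAbove; split_ifs <;> omega

theorem exists_succAbove_eq {k m : ℕ} (h : m ≠ k) : ∃ i, succAbove k i = m :=
  if hm : m < k then ⟨m, if_pos hm⟩ else ⟨m - 1, by unfold succAbove; split_ifs <;> omega⟩

@[simp]
theorem insertNth_apply_same (k : ℕ) (a : α) (r : ℕ → α) : insertNth k a r k = a := by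
  simp [insertNth]

@[simp]
theorem insertNth_apply_succAbove (k : ℕ) (a : α) (r : ℕ → α) (i : ℕ) :
    insertNth k a r (succAbove k i) = r i := by
  unfold insertNth succAbove
  split_ifs <;> first | rfl | omega

theorem continuous_insertNth [TopologicalSpace α] (k : ℕ) (a : α) :
    Continuous (insertNth k a) := by
  refine continuous_pi fun m => ?_
  unfold insertNth
  split_ifs <;> fun_prop

theorem range_insertNth_comp (a : α) (c : σ → α) :
    Set.range (fun x : ℕ × (ℕ → σ) => insertNth x.1 a (c ∘ x.2)) =
      {f | ∃ k, f k = a ∧ ∀ m, m ≠ k → f m ∈ Set.range c} := by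
  ext f
  constructor
  · rintro ⟨⟨k, r⟩, rfl⟩
    refine ⟨k, insertNth_apply_same k a _, fun m hm => ?_⟩
    obtain ⟨i, rfl⟩ := exists_succAbove_eq hm
    exact ⟨r i, by simp⟩
  · rintro ⟨k, hk, hrows⟩
    choose r hr using fun i => hrows (succAbove k i) (succAbove_ne k i)
    refine ⟨(k, r), funext fun m => ?_⟩
    by_cases hm : m = k
    · subst hm; simp [hk]
    · obtain ⟨i, rfl⟩ := exists_succAbove_eq hm
      simp [hr]

theorem injective_insertNth_comp {a : α} {c : σ → α} (hc : Function.Injective c)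
    (ha : a ∉ Set.range c) :
    Function.Injective (fun x : ℕ × (ℕ → σ) => insertNth x.1 a (c ∘ x.2)) := by
  rintro ⟨k, r⟩ ⟨k', r'⟩ h
  simp only at h
  obtain rfl : k = k' := by
    by_contra hne
    obtain ⟨i, hi⟩ := exists_succAbove_eq hne
    have := congrFun h k
    rw [insertNth_apply_same, ← hi, insertNth_apply_succAbove] at this
    exact ha ⟨r' i, this.symm⟩
  refine Prod.ext rfl (funext fun i => hc ?_)
  simpa using congrFun h (succAbove k i)

theorem continuous_insertNth_comp [TopologicalSpace α] [TopologicalSpace σ] (a : α)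
    {c : σ → α} (hc : Continuous c) :
    Continuous (fun x : ℕ × (ℕ → σ) => insertNth x.1 a (c ∘ x.2)) :=
  continuous_prod_of_discrete_left.mpr fun k =>
    (continuous_insertNth k a).comp (continuous_pi fun i => hc.comp (continuous_apply i))

end Nat

def nonzeroDecode (δ : ℕ → ℕ) (p : ℕ) : ℕ :=
  if p < δ 0 then 0 else if p = δ 0 then δ 1 + 1 else δ (p - δ 0 + 1)

section nonzeroDecode

variable (δ : ℕ → ℕ)

theorem nonzeroDecode_apply_of_lt {p : ℕ} (hp : p < δ 0) : nonzeroDecode δ p = 0 := if_pos hp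

theorem nonzeroDecode_apply_head : nonzeroDecode δ (δ 0) = δ 1 + 1 := by simp [nonzeroDecode]

theorem nonzeroDecode_apply_add (q : ℕ) : nonzeroDecode δ (δ 0 + q + 1) = δ (q + 2) := by
  simp only [nonzeroDecode]
  rw [if_neg (by omega), if_neg (by omega)]
  congr 1; omega

theorem continuous_nonzeroDecode : Continuous nonzeroDecode := by
  let decodeAt : ℕ × (ℕ → ℕ) → ℕ → ℕ := fun x p =>
    if p < x.1 then 0 else if p = x.1 then x.2 1 + 1 else x.2 (p - x.1 + 1)
  have : Continuous decodeAt := continuous_prod_of_discrete_left.mpr fun n =>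
    continuous_pi fun p => by dsimp only [decodeAt]; split_ifs <;> fun_prop
  exact this.comp (by fun_prop : Continuous fun δ : ℕ → ℕ => (δ 0, δ))

end nonzeroDecode

theorem injective_nonzeroDecode : Function.Injective nonzeroDecode := by
  intro δ δ' h
  have h0 : δ 0 = δ' 0 := by
    by_contra hne
    rcases Nat.lt_or_gt_of_ne hne with hlt | hlt
    · have := congrFun h (δ 0)
      rw [nonzeroDecode_apply_head, nonzeroDecode_apply_of_lt δ' hlt] at this
      omega
    · have := congrFun h (δ' 0)
      rw [nonzeroDecode_apply_head, nonzeroDecode_apply_of_lt δ hlt] at this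
      omega
  funext q
  match q with
  | 0 => exact h0
  | 1 =>
    have := congrFun h (δ 0)
    rw [nonzeroDecode_apply_head, h0, nonzeroDecode_apply_head] at this
    omega
  | q + 2 =>
    have := congrFun h (δ 0 + q + 1)
    rwa [nonzeroDecode_apply_add, h0, nonzeroDecode_apply_add] at this

theorem range_nonzeroDecode : Set.range nonzeroDecode = {δ | δ ≠ 0} := by
  ext δ
  constructor
  · rintro ⟨δ, rfl⟩ h
    simpa [nonzeroDecode_apply_head] using congrFun h (δ 0)
  · intro hδ
    have hex : ∃ p, δ p ≠ 0 := Function.ne_iff.mp hδ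
    set n := Nat.find hex
    let code : ℕ → ℕ := fun q => match q with
      | 0 => n
      | 1 => δ n - 1
      | q + 2 => δ (n + q + 1)
    refine ⟨code, funext fun p => ?_⟩
    rcases lt_trichotomy p n with hp | rfl | hp
    · rw [nonzeroDecode_apply_of_lt code hp]
      exact (not_not.mp (Nat.find_min hex hp)).symm
    · change nonzeroDecode code (code 0) = _
      rw [nonzeroDecode_apply_head]
      exact Nat.sub_add_cancel (Nat.one_le_iff_ne_zero.mpr (Nat.find_spec hex))
    · obtain ⟨q, rfl⟩ := Nat.exists_eq_add_of_lt hp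
      exact nonzeroDecode_apply_add code q

def baireSplit : (ℕ → ℕ) ≃ ℕ × (ℕ → ℕ → ℕ) where
  toFun β := (β 0, fun i q => β (Nat.pair i q + 1))
  invFun x j := Nat.casesOn j x.1 fun j => x.2 j.unpair.1 j.unpair.2
  left_inv β := funext fun j => by cases j <;> simp
  right_inv x := by simp

theorem continuous_baireSplit : Continuous baireSplit := by
  unfold baireSplit; dsimp only [Equiv.coe_fn_mk]; fun_prop

/-- `E₂!` is the range of a continuous injective function from Baire space. -/
theorem E2bang_is_injective_continuous_image :
    ∃ F : (ℕ → ℕ) → (ℕ → ℕ → ℕ), Continuous F ∧ Function.Injective F ∧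
      Set.range F = E2bang := by
  have zero_notMem : (0 : ℕ → ℕ) ∉ Set.range nonzeroDecode := by simp [range_nonzeroDecode]
  refine ⟨(fun x => Nat.insertNth x.1 0 (nonzeroDecode ∘ x.2)) ∘ baireSplit,
    (Nat.continuous_insertNth_comp 0 continuous_nonzeroDecode).comp continuous_baireSplit,
    (Nat.injective_insertNth_comp injective_nonzeroDecode zero_notMem).comp baireSplit.injective, ?_⟩
  rw [Set.range_comp, baireSplit.range_eq_univ, Set.image_univ, Nat.range_insertNth_comp,
    range_nonzeroDecode]
  ext α
  simp [E2bang, funext_iff]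
end

section
/- The Souslin operation applied to a family of analytic sets yields an analytic set: if A : List ℕ → Set (ℕ → ℕ) assigns to every finite sequence s an analytic subset A s of Baire space, then the set ⋃_{γ : ℕ → ℕ} ⋂_{n} A [γ 0, …, γ (n-1)] is analytic. -/
/-!
The Souslin set is the projection to the second factor of
`{(γ, x) | ∀ n, x ∈ A (γ|n)}` in `(ℕ → ℕ) × (ℕ → ℕ)`. For fixed `n` the condition depends on `γ`
only through the finitely many values `γ|n`, so the `n`-th level is the countable union of the
products `{γ | γ|n = s} ×ˢ A s` of a clopen set and an analytic set. Countable unions and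
intersections, finite products and continuous images of analytic sets are analytic.
-/

/-- A subset of Baire space is analytic iff it is empty or the continuous
image of Baire space. -/
def IsAnalyticSet (X : Set (ℕ → ℕ)) : Prop :=
  X = ∅ ∨ ∃ f : (ℕ → ℕ) → (ℕ → ℕ), Continuous f ∧ Set.range f = X

open MeasureTheory Set

theorem isAnalyticSet_iff_analyticSet {X : Set (ℕ → ℕ)} : IsAnalyticSet X ↔ AnalyticSet X := by
  rw [AnalyticSet_def]
  rfl

theorem MeasureTheory.AnalyticSet.prod {α β : Type*} [TopologicalSpace α] [TopologicalSpace β]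
    {s : Set α} {t : Set β} (hs : AnalyticSet s) (ht : AnalyticSet t) : AnalyticSet (s ×ˢ t) := by
  obtain ⟨X, _, _, f, hf, rfl⟩ := analyticSet_iff_exists_polishSpace_range.1 hs
  obtain ⟨Y, _, _, g, hg, rfl⟩ := analyticSet_iff_exists_polishSpace_range.1 ht
  rw [← range_prodMap]
  exact analyticSet_range_of_polishSpace (hf.prodMap hg)

theorem analyticSet_setOf_snd_mem_of_continuous {X Y ι : Type*}
    [TopologicalSpace X] [PolishSpace X] [TopologicalSpace Y] [TopologicalSpace ι]
    [DiscreteTopology ι] [Countable ι] {c : X → ι}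
    (hc : Continuous c) {A : ι → Set Y} (hA : ∀ i, AnalyticSet (A i)) :
    AnalyticSet {p : X × Y | p.2 ∈ A (c p.1)} := by
  have hfiber : ∀ i, AnalyticSet (c ⁻¹' {i}) := fun i =>
    ((isClosed_discrete {i}).preimage hc).analyticSet
  have hunion : {p : X × Y | p.2 ∈ A (c p.1)} = ⋃ i, (c ⁻¹' {i}) ×ˢ A i := by
    ext p
    simp
  rw [hunion]
  exact AnalyticSet.iUnion fun i => (hfiber i).prod (hA i)

theorem List.map_range_eq_ofFn {α : Type*} (f : ℕ → α) (n : ℕ) :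
    (List.range n).map f = List.ofFn fun i : Fin n => f i := by
  rw [← List.map_coe_finRange_eq_range, List.map_map, List.ofFn_eq_map]
  rfl

/-- The Souslin operation applied to a family of analytic sets yields an
analytic set. -/
theorem souslin_operation_analytic (A : List ℕ → Set (ℕ → ℕ))
    (hA : ∀ s, IsAnalyticSet (A s)) :
    IsAnalyticSet (⋃ γ : ℕ → ℕ, ⋂ n : ℕ, A ((List.range n).map γ)) := by
  have hA' : ∀ s, AnalyticSet (A s) := fun s => isAnalyticSet_iff_analyticSet.1 (hA s)
  have hlevel : ∀ n, AnalyticSet {p : (ℕ → ℕ) × (ℕ → ℕ) | p.2 ∈ A ((List.range n).map p.1)} := by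
    intro n
    simp only [List.map_range_eq_ofFn]
    exact analyticSet_setOf_snd_mem_of_continuous (c := fun (γ : ℕ → ℕ) (i : Fin n) => γ i)
      (by fun_prop) fun v => hA' (List.ofFn v)
  have hsouslin : (⋃ γ : ℕ → ℕ, ⋂ n : ℕ, A ((List.range n).map γ)) =
      Prod.snd '' ⋂ n, {p : (ℕ → ℕ) × (ℕ → ℕ) | p.2 ∈ A ((List.range n).map p.1)} := by
    ext x
    simp
  rw [isAnalyticSet_iff_analyticSet, hsouslin]
  exact (AnalyticSet.iInter hlevel).image_of_continuous continuous_snd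
end
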